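/- Let G = Σ1 × Σ2 be the direct product of two genus-2 surface groups with generators a_i^(k), b_i^(k) as above, and set c_i = a_i^(1)(b_i^(1))^{-1}, d = [b_1^(1), b_2^(1)], f_i = a_i^(1)(a_i^(2))^{-1}. Then in G the identity [a_i^(1), b_i^(1)] = [f_i, c_i^{-1}] holds for i = 1, 2. -/

import Mathlib

open FreeGroup
open scoped commutatorElement

def surfRels : Set (FreeGroup (Fin 4)) :=
  {⁅FreeGroup.of (0 : Fin 4), FreeGroup.of (1 : Fin 4)⁆ * ⁅FreeGroup.of (2 : Fin 4), FreeGroup.of (3 : Fin 4)⁆}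

/-- The genus-2 surface group. -/
abbrev Surf := PresentedGroup surfRels

def a (i : Fin 2) : Surf := PresentedGroup.of ⟨i.val, by omega⟩
def b (i : Fin 2) : Surf := PresentedGroup.of ⟨i.val + 2, by omega⟩

abbrev M := Multiplicative (ℤ × ℤ)

def φgen : Fin 4 → M :=
  fun n => Multiplicative.ofAdd (if n.val = 0 ∨ n.val = 2 then ((1 : ℤ), (0 : ℤ)) else ((0 : ℤ), (1 : ℤ)))

lemma φrels : ∀ r ∈ surfRels, FreeGroup.lift φgen r = 1 := by
  rintro r hr
  simp only [surfRels, Set.mem_singleton_iff] at hr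
  subst hr
  have h1 : (FreeGroup.lift φgen) (⁅FreeGroup.of (0 : Fin 4), FreeGroup.of (1 : Fin 4)⁆ * ⁅FreeGroup.of (2 : Fin 4), FreeGroup.of (3 : Fin 4)⁆) = ⁅φgen 0, φgen 1⁆ * ⁅φgen 2, φgen 3⁆ := by
    simp [commutatorElement_def]
  rw [h1, commutatorElement_eq_one_iff_mul_comm.mpr (mul_comm _ _),
    commutatorElement_eq_one_iff_mul_comm.mpr (mul_comm _ _), one_mul]

/-- The homomorphism Σ → ℤ² sending aᵢ, bᵢ to the i-th standard basis vector. -/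
def φ1 : Surf →* M := PresentedGroup.toGroup φrels

/-- The direct product of r genus-2 surface groups. -/
abbrev GG (r : ℕ) := ∀ _ : Fin r, Surf

def A (r : ℕ) (i : Fin 2) (k : Fin r) : GG r := Pi.mulSingle k (a i)
def B (r : ℕ) (i : Fin 2) (k : Fin r) : GG r := Pi.mulSingle k (b i)

/-- The homomorphism G = Σ₁ × ⋯ × Σr → ℤ² sending all aᵢ, bᵢ to eᵢ. -/
def Φ (r : ℕ) : GG r →* M := ∏ k : Fin r, φ1.comp (Pi.evalMonoidHom (fun _ => Surf) k)

theorem commutatorElement_eq_mul_inv_of_commute {G : Type*} [Group G] {x y z : G}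
    (hx : Commute z x) (hy : Commute z y) : ⁅x, y⁆ = ⁅x * z⁻¹, (x * y⁻¹)⁻¹⁆ := by
  have hyx : z⁻¹ * (y * x⁻¹) * z = y * x⁻¹ := (hy.mul_right hx.inv_right).inv_mul_cancel
  calc ⁅x, y⁆ = x * (z⁻¹ * (y * x⁻¹) * z) * y⁻¹ := by rw [hyx, commutatorElement_def]; group
    _ = ⁅x * z⁻¹, (x * y⁻¹)⁻¹⁆ := by rw [commutatorElement_def]; group

theorem stmt5 (i : Fin 2) :
    ⁅A 2 i 0, B 2 i 0⁆ =
      ⁅A 2 i 0 * (A 2 i 1)⁻¹, (A 2 i 0 * (B 2 i 0)⁻¹)⁻¹⁆ :=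
  commutatorElement_eq_mul_inv_of_commute (Pi.mulSingle_commute (by decide) _ _)
    (Pi.mulSingle_commute (by decide) _ _)
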